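/- Let p ≡ 3 (mod 4) be prime and let b₁, b₂ ∈ ℚ^× with v_p(b₁) ≠ v_p(b₂) (v_p the p-adic valuation), and a₁, a₂ ∈ ℚ. Let ρᵢ = Cᵢ J Cᵢ⁻¹ with Cᵢ = [[bᵢ, aᵢ],[0,1]] and J = [[0,-1],[1,0]]. Then the group generated by ρ₁ and ρ₂ in GL₂(ℚ_p) stabilizes no vertex of the Bruhat–Tits tree T_p of SL₂(ℚ_p); equivalently, ρ₁ρ₂ fixes no vertex of T_p. -/

import Mathlib

/-!
The product `ρ₁ρ₂` has determinant `1` and trace `-((a₁ - a₂)² + b₁² + b₂²) / (b₁b₂)`.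
Since `-1` is not a square mod `p`, `‖x² + y²‖ = max ‖x‖ ‖y‖ ²` in `ℚ_p`; so if `‖b₂‖ < ‖b₁‖`
the numerator has norm at least `‖b₁‖² > ‖b₁b₂‖`, and the trace is not a `p`-adic integer.

On the other hand, if `g` with `det g = 1` fixes the vertex `[L]`, then `(c • g) L = L` for some
scalar `c`. In a `ℤ_p`-basis of `L` both `c • g` and its inverse have integral matrices, so `c²` is
a unit and `tr (c • g) = c tr g` is integral; hence `(tr g)²`, and then `tr g`, is integral.
So `ρ₁ρ₂` fixes no vertex, and neither can `ρ₁` and `ρ₂` have a common fixed vertex.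
-/

open Matrix

variable {K : Type*} [Field K]

noncomputable def matMap (O : Subring K) (g : Matrix (Fin 2) (Fin 2) K)
    (L : Submodule O (Fin 2 → K)) : Submodule O (Fin 2 → K) :=
  Submodule.map ((Matrix.toLin' g).restrictScalars O) L

def IsLattice (O : Subring K) (L : Submodule O (Fin 2 → K)) : Prop :=
  L.FG ∧ Submodule.span K (L : Set (Fin 2 → K)) = ⊤

/- Two lattices are equivalent (define the same vertex of the tree T_v) iff
they differ by a scalar in K^×. -/
noncomputable def LatEquiv (O : Subring K) (L L' : Submodule O (Fin 2 → K)) : Prop :=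
  ∃ c : K, c ≠ 0 ∧ matMap O (c • (1 : Matrix (Fin 2) (Fin 2) K)) L = L'

/- g fixes the vertex [L] of the tree T_v iff g·L is equivalent to L. -/
noncomputable def FixesClass (O : Subring K) (g : Matrix (Fin 2) (Fin 2) K)
    (L : Submodule O (Fin 2 → K)) : Prop :=
  LatEquiv O (matMap O g L) L

noncomputable def stdLat (O : Subring K) : Submodule O (Fin 2 → K) :=
  Submodule.span O (Set.range fun i : Fin 2 => (Pi.single i 1 : Fin 2 → K))

section LatticeEndomorphism

variable {R V : Type*} [CommRing R] [Algebra R K] [IsFractionRing R K]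
  [AddCommGroup V] [Module K V] [Module R V] [IsScalarTower R K V]
  {M : Submodule R V} [M.IsLattice K]

theorem Module.Basis.extendOfIsLattice_repr_coe {κ : Type*} (b : Basis κ R M) (x : M) (k : κ) :
    (b.extendOfIsLattice K).repr x k = algebraMap R K (b.repr x k) := by
  have : ((b.extendOfIsLattice K).repr.toLinearMap.restrictScalars R).comp M.subtype =
      (Finsupp.mapRange.linearMap (Algebra.linearMap R K)).comp b.repr.toLinearMap :=
    b.ext fun j ↦ by
      simp only [LinearMap.comp_apply, Submodule.subtype_apply, LinearMap.restrictScalars_apply,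
        LinearEquiv.coe_coe, Finsupp.mapRange.linearMap_apply]
      rw [← b.extendOfIsLattice_apply K, Basis.repr_self, Basis.repr_self]
      simp
  exact congr($this x k)

theorem Module.Basis.toMatrix_extendOfIsLattice {κ : Type*} [Fintype κ] [DecidableEq κ]
    (b : Basis κ R M) (f : V →ₗ[K] V) (hf : ∀ x ∈ M, f x ∈ M) :
    LinearMap.toMatrix (b.extendOfIsLattice K) (b.extendOfIsLattice K) f =
      (LinearMap.toMatrix b b ((f.restrictScalars R).restrict hf)).map (algebraMap R K) := by
  ext i j
  rw [LinearMap.toMatrix_apply, Matrix.map_apply, LinearMap.toMatrix_apply,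
    ← b.extendOfIsLattice_repr_coe, b.extendOfIsLattice_apply K]
  rfl

variable [IsDomain R] [IsPrincipalIdealRing R]

theorem LinearMap.det_mem_range_of_mapsTo_lattice (f : V →ₗ[K] V) (hf : ∀ x ∈ M, f x ∈ M) :
    LinearMap.det f ∈ (algebraMap R K).range := by
  let b := Module.Free.chooseBasis R M
  refine ⟨Matrix.det (LinearMap.toMatrix b b ((f.restrictScalars R).restrict hf)), ?_⟩
  rw [← LinearMap.det_toMatrix (b.extendOfIsLattice K), b.toMatrix_extendOfIsLattice f hf,
    RingHom.map_det]
  rfl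

theorem LinearMap.trace_mem_range_of_mapsTo_lattice (f : V →ₗ[K] V) (hf : ∀ x ∈ M, f x ∈ M) :
    LinearMap.trace K V f ∈ (algebraMap R K).range := by
  let b := Module.Free.chooseBasis R M
  refine ⟨Matrix.trace (LinearMap.toMatrix b b ((f.restrictScalars R).restrict hf)), ?_⟩
  rw [LinearMap.trace_eq_matrix_trace K (b.extendOfIsLattice K), b.toMatrix_extendOfIsLattice f hf,
    AddMonoidHom.map_trace]

end LatticeEndomorphism

section FixedVertex

variable {O : Subring K}

theorem IsLattice.toSubmoduleIsLattice {L : Submodule O (Fin 2 → K)} (hL : IsLattice O L) :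
    L.IsLattice K :=
  ⟨hL.1, hL.2⟩

theorem matMap_mul (g h : Matrix (Fin 2) (Fin 2) K) (L : Submodule O (Fin 2 → K)) :
    matMap O (g * h) L = matMap O g (matMap O h L) := by
  rw [matMap, matMap, matMap, Matrix.toLin'_mul, LinearMap.restrictScalars_comp, Submodule.map_comp]

theorem matMap_smul_one_mul (c : K) (g : Matrix (Fin 2) (Fin 2) K) (L : Submodule O (Fin 2 → K)) :
    matMap O (c • 1) (matMap O g L) = matMap O (c • g) L := by
  rw [← matMap_mul, Matrix.smul_mul, one_mul]

theorem fixesClass_iff {g : Matrix (Fin 2) (Fin 2) K} {L : Submodule O (Fin 2 → K)} :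
    FixesClass O g L ↔ ∃ c : K, c ≠ 0 ∧ matMap O (c • g) L = L := by
  simp only [FixesClass, LatEquiv, matMap_smul_one_mul]

theorem FixesClass.mul {g h : Matrix (Fin 2) (Fin 2) K} {L : Submodule O (Fin 2 → K)}
    (hg : FixesClass O g L) (hh : FixesClass O h L) : FixesClass O (g * h) L := by
  obtain ⟨c, hc, hcg⟩ := fixesClass_iff.mp hg
  obtain ⟨d, hd, hdh⟩ := fixesClass_iff.mp hh
  refine fixesClass_iff.mpr ⟨c * d, mul_ne_zero hc hd, ?_⟩
  rw [← smul_mul_smul_comm, matMap_mul, hdh, hcg]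

variable [IsPrincipalIdealRing O] [IsFractionRing O K]

theorem IsLattice.det_mem_of_matMap_le {h : Matrix (Fin 2) (Fin 2) K}
    {L : Submodule O (Fin 2 → K)} (hL : IsLattice O L) (hh : matMap O h L ≤ L) : h.det ∈ O := by
  have := hL.toSubmoduleIsLattice
  obtain ⟨y, hy⟩ := LinearMap.det_mem_range_of_mapsTo_lattice (M := L) (toLin' h)
    fun x hx ↦ hh ⟨x, hx, rfl⟩
  rw [← LinearMap.det_toLin', ← hy]
  exact y.2

theorem IsLattice.trace_mem_of_matMap_le {h : Matrix (Fin 2) (Fin 2) K}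
    {L : Submodule O (Fin 2 → K)} (hL : IsLattice O L) (hh : matMap O h L ≤ L) : h.trace ∈ O := by
  have := hL.toSubmoduleIsLattice
  obtain ⟨y, hy⟩ := LinearMap.trace_mem_range_of_mapsTo_lattice (M := L) (toLin' h)
    fun x hx ↦ hh ⟨x, hx, rfl⟩
  rw [← Matrix.trace_toLin'_eq, ← hy]
  exact y.2

theorem IsLattice.inv_det_mem_of_matMap_eq {h : Matrix (Fin 2) (Fin 2) K}
    {L : Submodule O (Fin 2 → K)} (hL : IsLattice O L) (hh : matMap O h L = L) :
    h.det⁻¹ ∈ O := by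
  rcases eq_or_ne h.det 0 with h0 | h0
  · rw [h0, _root_.inv_zero]
    exact O.zero_mem
  have hinv : matMap O h⁻¹ L = L := by
    conv_lhs => rw [← hh]
    rw [← matMap_mul, Matrix.nonsing_inv_mul _ h0.isUnit, matMap, Matrix.toLin'_one]
    exact Submodule.map_id L
  rw [← Ring.inverse_eq_inv', ← Matrix.det_nonsing_inv]
  exact hL.det_mem_of_matMap_le hinv.le

theorem FixesClass.trace_mem {g : Matrix (Fin 2) (Fin 2) K} {L : Submodule O (Fin 2 → K)}
    (hg : FixesClass O g L) (hL : IsLattice O L) (hdet : g.det = 1) : g.trace ∈ O := by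
  obtain ⟨c, hc, hcg⟩ := fixesClass_iff.mp hg
  have htr : c * g.trace ∈ O := by
    simpa [Matrix.trace_smul] using hL.trace_mem_of_matMap_le hcg.le
  have hdet_inv : (c ^ 2)⁻¹ ∈ O := by
    simpa [Matrix.det_smul, hdet] using hL.inv_det_mem_of_matMap_eq hcg
  have hsq : g.trace ^ 2 = (c * g.trace) ^ 2 * (c ^ 2)⁻¹ := by field_simp
  have hsq_mem : g.trace ^ 2 ∈ O := hsq ▸ O.mul_mem (O.pow_mem htr 2) hdet_inv
  obtain ⟨y, hy⟩ := IsIntegrallyClosed.exists_algebraMap_eq_of_isIntegral_pow (R := O) two_pos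
    (isIntegral_algebraMap (x := (⟨_, hsq_mem⟩ : O)) : IsIntegral O (g.trace ^ 2))
  exact hy ▸ y.2

end FixedVertex

section Rho

noncomputable def rho (b a : K) : Matrix (Fin 2) (Fin 2) K :=
  !![b, a; 0, 1] * !![0, -1; 1, 0] * (!![b, a; 0, 1])⁻¹

theorem rho_eq {b : K} (a : K) (hb : b ≠ 0) :
    rho b a = !![a / b, -((a ^ 2 + b ^ 2) / b); 1 / b, -(a / b)] := by
  have hinv : (!![b, a; 0, 1])⁻¹ = !![b⁻¹, -(a / b); 0, 1] := by
    refine Matrix.inv_eq_right_inv ?_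
    ext i j
    fin_cases i <;> fin_cases j <;> simp [hb, mul_div_cancel₀]
  rw [rho, hinv]
  ext i j
  fin_cases i <;> fin_cases j <;> simp [field]; ring

theorem det_rho {b : K} (a : K) (hb : b ≠ 0) : (rho b a).det = 1 := by
  have hC : IsUnit !![b, a; 0, 1] := by
    rw [Matrix.isUnit_iff_isUnit_det, Matrix.det_fin_two_of]
    simpa using hb
  rw [rho, Matrix.det_conj hC, Matrix.det_fin_two_of]
  ring

theorem trace_rho_mul_rho {b₁ b₂ : K} (a₁ a₂ : K) (hb₁ : b₁ ≠ 0) (hb₂ : b₂ ≠ 0) :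
    (rho b₁ a₁ * rho b₂ a₂).trace = -(((a₁ - a₂) ^ 2 + b₁ ^ 2 + b₂ ^ 2) / (b₁ * b₂)) := by
  rw [rho_eq a₁ hb₁, rho_eq a₂ hb₂, Matrix.mul_fin_two, Matrix.trace_fin_two_of]
  field_simp
  ring

end Rho

section Padic

variable {p : ℕ} [Fact p.Prime]

instance : IsPrincipalIdealRing (PadicInt.subring p) :=
  inferInstanceAs (IsPrincipalIdealRing ℤ_[p])

instance : IsFractionRing (PadicInt.subring p) ℚ_[p] :=
  inferInstanceAs (IsFractionRing ℤ_[p] ℚ_[p])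

theorem PadicInt.isUnit_one_add_sq (hp : p % 4 = 3) (z : ℤ_[p]) : IsUnit (1 + z ^ 2) := by
  rw [← IsLocalRing.notMem_maximalIdeal, ← PadicInt.ker_toZMod, RingHom.mem_ker, map_add,
    map_one, map_pow]
  intro h
  exact ZMod.exists_sq_eq_neg_one_iff.mp ⟨toZMod z, by linear_combination -h⟩ hp

theorem Padic.norm_sq_add_sq (hp : p % 4 = 3) (x y : ℚ_[p]) :
    ‖x ^ 2 + y ^ 2‖ = max ‖x‖ ‖y‖ ^ 2 := by
  wlog hyx : ‖y‖ ≤ ‖x‖ generalizing x y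
  · rw [add_comm, max_comm]
    exact this y x (le_of_not_ge hyx)
  rcases eq_or_ne x 0 with rfl | hx
  · have hy : y = 0 := norm_le_zero_iff.mp (by simpa using hyx)
    simp [hy]
  let z : ℤ_[p] := ⟨y / x, by rw [norm_div]; exact div_le_one_of_le₀ hyx (norm_nonneg _)⟩
  have hu : ‖((1 + z ^ 2 : ℤ_[p]) : ℚ_[p])‖ = 1 :=
    PadicInt.isUnit_iff.mp (PadicInt.isUnit_one_add_sq hp z)
  have hfactor : x ^ 2 + y ^ 2 = x ^ 2 * ((1 + z ^ 2 : ℤ_[p]) : ℚ_[p]) := by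
    rw [PadicInt.coe_add, PadicInt.coe_one, PadicInt.coe_pow, show (z : ℚ_[p]) = y / x from rfl]
    field_simp
  rw [hfactor, norm_mul, hu, mul_one, norm_pow, max_eq_left hyx]

theorem Padic.one_lt_norm_sq_add_sq_add_sq_div (hp : p % 4 = 3) (x : ℚ_[p]) {y z : ℚ_[p]}
    (hy : y ≠ 0) (hz : z ≠ 0) (hyz : ‖y‖ ≠ ‖z‖) :
    1 < ‖(x ^ 2 + y ^ 2 + z ^ 2) / (y * z)‖ := by
  wlog hzy : ‖z‖ < ‖y‖ generalizing y z
  · rw [add_right_comm, mul_comm]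
    exact this hz hy hyz.symm (hyz.lt_or_gt.resolve_right hzy)
  have hxy : ‖y‖ ^ 2 ≤ ‖x ^ 2 + y ^ 2‖ := by
    rw [Padic.norm_sq_add_sq hp]
    gcongr
    exact le_max_right _ _
  have hz_small : ‖z ^ 2‖ < ‖x ^ 2 + y ^ 2‖ := by
    rw [norm_pow]
    exact lt_of_lt_of_le (by gcongr) hxy
  rw [norm_div, norm_mul, one_lt_div (by positivity), Padic.add_eq_max_of_ne hz_small.ne',
    max_eq_left hz_small.le]
  calc ‖y‖ * ‖z‖ < ‖y‖ * ‖y‖ := by gcongr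
    _ = ‖y‖ ^ 2 := (sq _).symm
    _ ≤ _ := hxy

theorem Padic.norm_ratCast_ne {q r : ℚ} (hq : q ≠ 0) (hr : r ≠ 0)
    (h : padicValRat p q ≠ padicValRat p r) : ‖(q : ℚ_[p])‖ ≠ ‖(r : ℚ_[p])‖ := by
  rw [Padic.norm_eq_zpow_neg_valuation (by exact_mod_cast hq),
    Padic.norm_eq_zpow_neg_valuation (by exact_mod_cast hr), Padic.valuation_ratCast,
    Padic.valuation_ratCast]
  have hp : (1 : ℝ) < p := by exact_mod_cast (Fact.out : p.Prime).one_lt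
  exact fun e ↦ h (neg_injective (zpow_right_injective₀ (by positivity) hp.ne' e))

end Padic

theorem stmt_14 (p : ℕ) [Fact p.Prime] (hp : p % 4 = 3)
    (b₁ b₂ : ℚ) (a₁ a₂ : ℚ) (hb₁ : b₁ ≠ 0) (hb₂ : b₂ ≠ 0)
    (hval : padicValRat p b₁ ≠ padicValRat p b₂)
    (ρ₁ ρ₂ : Matrix (Fin 2) (Fin 2) ℚ_[p])
    (hρ₁ : ρ₁ = !![(b₁ : ℚ_[p]), (a₁ : ℚ_[p]); 0, 1] * !![0, -1; 1, 0] *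
      (!![(b₁ : ℚ_[p]), (a₁ : ℚ_[p]); 0, 1])⁻¹)
    (hρ₂ : ρ₂ = !![(b₂ : ℚ_[p]), (a₂ : ℚ_[p]); 0, 1] * !![0, -1; 1, 0] *
      (!![(b₂ : ℚ_[p]), (a₂ : ℚ_[p]); 0, 1])⁻¹) :
    (¬ ∃ L : Submodule (PadicInt.subring p) (Fin 2 → ℚ_[p]),
        IsLattice (PadicInt.subring p) L ∧
        FixesClass (PadicInt.subring p) ρ₁ L ∧
        FixesClass (PadicInt.subring p) ρ₂ L) ∧
    (∀ L : Submodule (PadicInt.subring p) (Fin 2 → ℚ_[p]),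
        IsLattice (PadicInt.subring p) L →
        ¬ FixesClass (PadicInt.subring p) (ρ₁ * ρ₂) L) := by
  have hb₁' : (b₁ : ℚ_[p]) ≠ 0 := by exact_mod_cast hb₁
  have hb₂' : (b₂ : ℚ_[p]) ≠ 0 := by exact_mod_cast hb₂
  change ρ₁ = rho _ _ at hρ₁
  change ρ₂ = rho _ _ at hρ₂
  have hdet : (ρ₁ * ρ₂).det = 1 := by
    rw [Matrix.det_mul, hρ₁, hρ₂, det_rho _ hb₁', det_rho _ hb₂', mul_one]
  have htr : 1 < ‖(ρ₁ * ρ₂).trace‖ := by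
    rw [hρ₁, hρ₂, trace_rho_mul_rho _ _ hb₁' hb₂', norm_neg]
    exact Padic.one_lt_norm_sq_add_sq_add_sq_div hp _ hb₁' hb₂' (Padic.norm_ratCast_ne hb₁ hb₂ hval)
  have hfree (L : Submodule (PadicInt.subring p) (Fin 2 → ℚ_[p]))
      (hL : IsLattice (PadicInt.subring p) L) : ¬ FixesClass (PadicInt.subring p) (ρ₁ * ρ₂) L :=
    fun hfix ↦ htr.not_ge (hfix.trace_mem hL hdet)
  exact ⟨fun ⟨L, hL, h₁, h₂⟩ ↦ hfree L hL (h₁.mul h₂), hfree⟩
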